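/- arXiv:2102.06104 — 2 statements merged into one kernel-verified Lean document; each statement's English description precedes it below -/
import Mathlib

section
/- For every abelian map ψ on a group G, every n ≥ 0 and every g ∈ G, one has g·ψ_n(g⁻¹) = δⁿ(g) (i.e., the map 1 − ψ_n equals δⁿ), and the recursion ψ_{n+1}(g) = ψ(g)·ψ_n(g·ψ(g⁻¹)) holds. -/
/-- `aDelta ψ g = g · ψ(g⁻¹)`, the map `δ = 1 - ψ`. -/
def aDelta {G : Type*} [Group G] (ψ : G → G) (g : G) : G := g * ψ g⁻¹

/-- `aPsi ψ n g = (δⁿ(g))⁻¹ · g`, the map `ψ_n = -(1-ψ)ⁿ + 1` (so `ψ_0 = 0`, `ψ_1 = ψ`). -/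
def aPsi {G : Type*} [Group G] (ψ : G → G) (n : ℕ) (g : G) : G :=
  ((aDelta ψ)^[n] g)⁻¹ * g

/-!
Write `ψ_n(g) = δⁿ(g)⁻¹ · g`. Unfolding `δⁿ⁺¹ = δ ∘ δⁿ` gives
`ψ_{n+1}(g) = ψ(g) · ψ(ψ_n g)⁻¹ · ψ_n(g)`, so every `ψ_n(g)` lies in the image of `ψ`, which is
an abelian subgroup. Inside it the recursion shows `ψ_n(g⁻¹) = ψ_n(g)⁻¹` by induction, which is the
first identity since `δⁿ(g) = g · ψ_n(g)⁻¹`. Unfolding `δⁿ⁺¹ = δⁿ ∘ δ` instead gives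
`ψ_n(δ g) = ψ_{n+1}(g) · ψ(g)⁻¹`, and the second identity says that `ψ_{n+1}(g)` commutes with
`ψ(g)`, again because both lie in the image of `ψ`.
-/

section AbelianMap

variable {G : Type*} [Group G]

theorem iterate_aDelta_eq_mul_inv_aPsi (ψ : G → G) (n : ℕ) (g : G) :
    (aDelta ψ)^[n] g = g * (aPsi ψ n g)⁻¹ := by
  simp [aPsi]

theorem aPsi_aDelta (ψ : G → G) (n : ℕ) (g : G) :
    aPsi ψ n (aDelta ψ g) = aPsi ψ (n + 1) g * ψ g⁻¹ := by
  simp only [aPsi, Function.iterate_succ_apply, aDelta, mul_assoc]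

variable (ψ : G →* G)

theorem aPsi_succ (n : ℕ) (g : G) :
    aPsi ψ (n + 1) g = ψ g * (ψ (aPsi ψ n g))⁻¹ * aPsi ψ n g := by
  rw [aPsi, Function.iterate_succ_apply', iterate_aDelta_eq_mul_inv_aPsi, aDelta]
  simp [mul_assoc]

theorem aPsi_mem_range (n : ℕ) (g : G) : aPsi ψ n g ∈ ψ.range := by
  induction n with
  | zero => simp [aPsi]
  | succ n ih =>
    rw [aPsi_succ]
    exact mul_mem (mul_mem ⟨g, rfl⟩ (inv_mem ⟨_, rfl⟩)) ih

variable {ψ} (hψ : ∀ a b, Commute (ψ a) (ψ b))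
include hψ

theorem commute_of_mem_range {x y : G} (hx : x ∈ ψ.range) (hy : y ∈ ψ.range) : Commute x y := by
  obtain ⟨a, rfl⟩ := hx
  obtain ⟨b, rfl⟩ := hy
  exact hψ a b

theorem aPsi_inv (n : ℕ) (g : G) : aPsi ψ n g⁻¹ = (aPsi ψ n g)⁻¹ := by
  induction n with
  | zero => simp [aPsi]
  | succ n ih =>
    have hmem := aPsi_mem_range ψ n g
    have h₁ : Commute (ψ g)⁻¹ (ψ (aPsi ψ n g)) := (hψ _ _).inv_left
    have h₂ : Commute (ψ g)⁻¹ (aPsi ψ n g)⁻¹ :=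
      (commute_of_mem_range hψ ⟨g, rfl⟩ hmem).inv_inv
    have h₃ : Commute (ψ (aPsi ψ n g)) (aPsi ψ n g)⁻¹ :=
      (commute_of_mem_range hψ ⟨_, rfl⟩ hmem).inv_right
    rw [aPsi_succ, aPsi_succ, ih, map_inv, map_inv, inv_inv]
    simp only [mul_inv_rev, inv_inv]
    rw [h₁.eq, mul_assoc, h₂.eq, ← mul_assoc, h₃.eq, mul_assoc]

theorem aPsi_succ_eq_mul_aPsi_aDelta (n : ℕ) (g : G) :
    aPsi ψ (n + 1) g = ψ g * aPsi ψ n (aDelta ψ g) := by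
  have h : Commute (ψ g) (aPsi ψ (n + 1) g) :=
    commute_of_mem_range hψ ⟨g, rfl⟩ (aPsi_mem_range ψ (n + 1) g)
  rw [aPsi_aDelta, map_inv, ← mul_assoc, h.mul_inv_cancel]

end AbelianMap

/-- For an abelian map ψ: `1 - ψ_n = δⁿ`, i.e. `g·ψ_n(g⁻¹) = δⁿ(g)`, and the
recursion `ψ_{n+1}(g) = ψ(g)·ψ_n(g·ψ(g⁻¹))` holds. -/
theorem stmt4 {G : Type*} [Group G] (ψ : G → G)
    (hψ : ∀ a b : G, ψ (a * b) = ψ a * ψ b)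
    (hab : ∀ a b : G, ψ a * ψ b = ψ b * ψ a)
    (n : ℕ) (g : G) :
    g * aPsi ψ n g⁻¹ = (aDelta ψ)^[n] g ∧
    aPsi ψ (n + 1) g = ψ g * aPsi ψ n (g * ψ g⁻¹) := by
  let f : G →* G := MonoidHom.mk' ψ hψ
  have hf : ∀ a b, Commute (f a) (f b) := hab
  refine ⟨?_, aPsi_succ_eq_mul_aPsi_aDelta hf n g⟩
  rw [iterate_aDelta_eq_mul_inv_aPsi]
  exact congrArg (g * ·) (aPsi_inv hf n g)
end

section
/- Let ψ be a fixed point free abelian map on a finite group G (ψ(g) = g implies g = 1), and let n > m ≥ 0. Then δ^m : G → G is a bijection satisfying δ^m(g ∘_m h) = δ^m(g)·δ^m(h) and δ^m(g ∘_n h) = δ^m(g) ∘_{n-m} δ^m(h) for all g, h ∈ G; hence the skew left brace (G, ∘_m, ∘_n) is isomorphic to the skew left brace (G, ∘_0, ∘_{n-m}). -/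
/-- `g ∘_n h = g · ψ_n(g⁻¹) · h · ψ_n(g)`. -/
def aCirc {G : Type*} [Group G] (ψ : G → G) (n : ℕ) (g h : G) : G :=
  g * aPsi ψ n g⁻¹ * h * aPsi ψ n g


/-!
Bundle `ψ` as an endomorphism `φ` with commutative image. By induction on `n`, each `ψ_n` is
itself an endomorphism with values in `φ(G)`: the induction step uses
`δ(gh) = δ(g) · φ(g) δ(h) φ(g)⁻¹` and that `ψ_n` kills conjugation by elements of `φ(G)`.
Hence `g ∘_n h = δⁿ(g) · h · ψ_n(g)`, and a short computation in which only elements of `φ(G)`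
are moved past each other gives `δ(g ∘_{k+1} h) = δ(g) ∘_k δ(h)`; iterating yields the
statement for `δ^m`. Fixed point freeness makes `δ` injective, hence bijective on a finite group.
-/

namespace AbelianMap

open Function

variable {G : Type*} [Group G] {φ : G →* G}

lemma commute_of_mem_range (hφ : ∀ a b, Commute (φ a) (φ b)) {x y : G}
    (hx : x ∈ φ.range) (hy : y ∈ φ.range) : Commute x y := by
  obtain ⟨a, rfl⟩ := hx
  obtain ⟨b, rfl⟩ := hy
  exact hφ a b

lemma aDelta_apply (g : G) : aDelta φ g = g * (φ g)⁻¹ := by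
  rw [aDelta, map_inv]

lemma aDelta_mul_self_apply (g : G) : aDelta φ g * φ g = g := by
  rw [aDelta_apply, inv_mul_cancel_right]

lemma aDelta_injective (hfpf : ∀ g, φ g = g → g = 1) : Injective (aDelta φ) := by
  intro a b hab
  rw [aDelta_apply, aDelta_apply] at hab
  have hfix : φ (b⁻¹ * a) = b⁻¹ * a := calc
    φ (b⁻¹ * a) = b⁻¹ * (b * (φ b)⁻¹) * φ a := by rw [map_mul, map_inv]; group
    _ = b⁻¹ * a := by rw [← hab]; group
  exact (inv_mul_eq_one.mp (hfpf _ hfix)).symm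

lemma iterate_aDelta_eq (n : ℕ) (g : G) : (aDelta φ)^[n] g = g * (aPsi φ n g)⁻¹ := by
  rw [aPsi]
  group

lemma aPsi_zero (g : G) : aPsi φ 0 g = 1 := by
  simp [aPsi]

lemma aPsi_succ (n : ℕ) (g : G) : aPsi φ (n + 1) g = aPsi φ n (aDelta φ g) * φ g := by
  rw [aPsi, aPsi, iterate_succ_apply, mul_assoc, aDelta_mul_self_apply]

lemma aPsi_mem_range (n : ℕ) (g : G) : aPsi φ n g ∈ φ.range := by
  induction n generalizing g with
  | zero => rw [aPsi_zero]; exact one_mem _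
  | succ n ih => rw [aPsi_succ]; exact mul_mem (ih _) ⟨g, rfl⟩

lemma aDelta_mul (g h : G) : aDelta φ (g * h) = aDelta φ g * (φ g * aDelta φ h * (φ g)⁻¹) := by
  simp only [aDelta_apply, map_mul]
  group

lemma aPsi_mul (hφ : ∀ a b, Commute (φ a) (φ b)) (n : ℕ) (g h : G) :
    aPsi φ n (g * h) = aPsi φ n g * aPsi φ n h := by
  induction n generalizing g h with
  | zero => simp [aPsi_zero]
  | succ n ih =>
    have hinv : aPsi φ n (φ g)⁻¹ = (aPsi φ n (φ g))⁻¹ := map_inv (MonoidHom.mk' _ ih) (φ g)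
    have hconj : aPsi φ n (φ g * aDelta φ h * (φ g)⁻¹) = aPsi φ n (aDelta φ h) := by
      rw [ih, ih, hinv]
      exact (commute_of_mem_range hφ (aPsi_mem_range n _) (aPsi_mem_range n _)).mul_inv_cancel
    have hcomm : Commute (φ g) (aPsi φ n (aDelta φ h)) :=
      commute_of_mem_range hφ ⟨g, rfl⟩ (aPsi_mem_range n _)
    rw [aPsi_succ, aPsi_succ, aPsi_succ, aDelta_mul, ih, hconj, map_mul, mul_assoc, mul_assoc,
      ← mul_assoc _ (φ g), ← hcomm.eq, mul_assoc]

lemma aPsi_inv (hφ : ∀ a b, Commute (φ a) (φ b)) (n : ℕ) (g : G) :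
    aPsi φ n g⁻¹ = (aPsi φ n g)⁻¹ :=
  map_inv (MonoidHom.mk' (aPsi φ n) (aPsi_mul hφ n)) g

lemma aCirc_eq (hφ : ∀ a b, Commute (φ a) (φ b)) (n : ℕ) (g h : G) :
    aCirc φ n g h = (aDelta φ)^[n] g * h * aPsi φ n g := by
  rw [aCirc, aPsi_inv hφ, iterate_aDelta_eq]

lemma aCirc_zero (g h : G) : aCirc φ 0 g h = g * h := by
  simp [aCirc, aPsi_zero]

lemma aDelta_aCirc_succ (hφ : ∀ a b, Commute (φ a) (φ b)) (k : ℕ) (g h : G) :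
    aDelta φ (aCirc φ (k + 1) g h) = aCirc φ k (aDelta φ g) (aDelta φ h) := by
  rw [aCirc_eq hφ, aCirc_eq hφ, iterate_succ_apply, aPsi_succ]
  generalize hD : (aDelta φ)^[k] (aDelta φ g) = D
  generalize ha_def : aPsi φ k (aDelta φ g) = a
  have hDa : D * a = aDelta φ g := by
    rw [← hD, ← ha_def, iterate_aDelta_eq, inv_mul_cancel_right]
  have hφ_arg : φ (D * h * (a * φ g)) = φ h * φ g := by
    rw [map_mul, map_mul, (hφ D h).eq, mul_assoc, ← map_mul, ← mul_assoc, hDa,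
      aDelta_mul_self_apply]
  have ha : Commute a (φ h) := commute_of_mem_range hφ (ha_def ▸ aPsi_mem_range k _) ⟨h, rfl⟩
  calc aDelta φ (D * h * (a * φ g))
      = D * h * (a * φ g) * (φ h * φ g)⁻¹ := by rw [aDelta_apply, hφ_arg]
    _ = D * h * (a * (φ h)⁻¹) := by group
    _ = D * aDelta φ h * a := by rw [ha.inv_right.eq, aDelta_apply]; group

lemma iterate_aDelta_aCirc (hφ : ∀ a b, Commute (φ a) (φ b)) (m k : ℕ) (g h : G) :
    (aDelta φ)^[m] (aCirc φ (k + m) g h) =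
      aCirc φ k ((aDelta φ)^[m] g) ((aDelta φ)^[m] h) := by
  induction m generalizing g h with
  | zero => rfl
  | succ m ih =>
    rw [← add_assoc, iterate_succ_apply, aDelta_aCirc_succ hφ, ih, iterate_succ_apply,
      iterate_succ_apply]

end AbelianMap

open AbelianMap in
/-- If ψ is a fixed point free abelian map on a finite group `G` and `n > m ≥ 0`,
then `δ^m` is a bijection which is a group homomorphism `(G,∘_m) → (G,∘_0)` and
`(G,∘_n) → (G,∘_{n-m})`; hence `(G, ∘_m, ∘_n) ≅ (G, ∘_0, ∘_{n-m})` as skew left braces. -/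
theorem stmt18 {G : Type*} [Group G] [Finite G] (ψ : G → G)
    (hψ : ∀ a b : G, ψ (a * b) = ψ a * ψ b)
    (hab : ∀ a b : G, ψ a * ψ b = ψ b * ψ a)
    (hfpf : ∀ g : G, ψ g = g → g = 1)
    (m n : ℕ) (hmn : m < n) :
    Function.Bijective ((aDelta ψ)^[m]) ∧
    (∀ g h : G, (aDelta ψ)^[m] (aCirc ψ m g h) =
      (aDelta ψ)^[m] g * (aDelta ψ)^[m] h) ∧
    (∀ g h : G, (aDelta ψ)^[m] (aCirc ψ n g h) =
      aCirc ψ (n - m) ((aDelta ψ)^[m] g) ((aDelta ψ)^[m] h)) ∧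
    (∃ f : G → G, Function.Bijective f ∧
      (∀ g h : G, f (aCirc ψ m g h) = aCirc ψ 0 (f g) (f h)) ∧
      (∀ g h : G, f (aCirc ψ n g h) = aCirc ψ (n - m) (f g) (f h))) := by
  obtain ⟨φ, rfl⟩ : ∃ φ : G →* G, ⇑φ = ψ := ⟨MonoidHom.mk' ψ hψ, rfl⟩
  have hbij : Function.Bijective (aDelta φ)^[m] :=
    (Finite.injective_iff_bijective.mp (aDelta_injective hfpf)).iterate m
  have hmul : ∀ g h : G, (aDelta φ)^[m] (aCirc φ m g h) =
      (aDelta φ)^[m] g * (aDelta φ)^[m] h := fun g h => by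
    simpa [aCirc_zero] using iterate_aDelta_aCirc hab m 0 g h
  have hcirc : ∀ g h : G, (aDelta φ)^[m] (aCirc φ n g h) =
      aCirc φ (n - m) ((aDelta φ)^[m] g) ((aDelta φ)^[m] h) := fun g h => by
    simpa [Nat.sub_add_cancel hmn.le] using iterate_aDelta_aCirc hab m (n - m) g h
  exact ⟨hbij, hmul, hcirc, _, hbij, fun g h => by rw [hmul, aCirc_zero], hcirc⟩
end
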